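/- Let r > d > 0, (x₀,y₀) ∈ (0,1)², x₀ ≠ y₀. Then for all s ∈ [0, s₀), the point (x_s, y_s) belongs to (0,1)², and at s = s₀ one has x_{s₀} = 0 and y_{s₀} = 0. -/

import Mathlib

/-- The coefficient `Q(x,y) = (r+d)x − r/2 − (r/2)(x/y) − d·x²`. -/
noncomputable def Qfun (r d x y : ℝ) : ℝ :=
  (r + d) * x - r / 2 - r / 2 * (x / y) - d * x ^ 2

/-- The coefficient `R(x,y) = r/(2x) + r/(2y) − d·x − d·y`. -/
noncomputable def Rfun (r d x y : ℝ) : ℝ :=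
  r / (2 * x) + r / (2 * y) - d * x - d * y

/-- The integration constant `λ = (2d·x₀y₀ − d(x₀+y₀))/((x₀−y₀)(r−d))`. -/
noncomputable def lamOf (r d x₀ y₀ : ℝ) : ℝ :=
  (2 * d * x₀ * y₀ - d * (x₀ + y₀)) / ((x₀ - y₀) * (r - d))

/-- The integration constant `μ = (−2d·x₀y₀ + r(x₀+y₀))/((x₀−y₀)(r−d))`. -/
noncomputable def muOf (r d x₀ y₀ : ℝ) : ℝ :=
  (-(2 * d * x₀ * y₀) + r * (x₀ + y₀)) / ((x₀ - y₀) * (r - d))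

/-- The characteristic curve `x_s = (λre^{rs} + μde^{ds})/(d(λe^{rs} + μe^{ds} + 1))`. -/
noncomputable def xChar (r d lam mu s : ℝ) : ℝ :=
  (lam * r * Real.exp (r * s) + mu * d * Real.exp (d * s))
    / (d * (lam * Real.exp (r * s) + mu * Real.exp (d * s) + 1))

/-- The characteristic curve `y_s = (λre^{rs} + μde^{ds})/(d(λe^{rs} + μe^{ds} − 1))`. -/
noncomputable def yChar (r d lam mu s : ℝ) : ℝ :=
  (lam * r * Real.exp (r * s) + mu * d * Real.exp (d * s))
    / (d * (lam * Real.exp (r * s) + mu * Real.exp (d * s) - 1))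

/-- The time `s₀ = log((x₀ + y₀ − 2x₀y₀)/(x₀ + y₀ − 2(d/r)x₀y₀))/(d − r)`. -/
noncomputable def s0Of (r d x₀ y₀ : ℝ) : ℝ :=
  Real.log ((x₀ + y₀ - 2 * x₀ * y₀) / (x₀ + y₀ - 2 * (d / r) * x₀ * y₀)) / (d - r)

/-!
Write `x_s = N_s / (d (P_s + 1))` and `y_s = N_s / (d (P_s - 1))` with
`N_s = λ r e^{rs} + μ d e^{ds}` and `P_s = λ e^{rs} + μ e^{ds}`. When `y₀ < x₀` the constants satisfy
`λ (r - d) < -d` and `μ (r - d) > r`, so `λ < 0 < μ`. Then `N_s = e^{ds} (λ r e^{(r-d)s} + μ d)` is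
positive before, and vanishes at, the time `s₀ = log (-μd / (λr)) / (r - d)`. While `N_s ≥ 0` and
`s ≥ 0`, `r P_s = N_s + μ (r - d) e^{ds} > r`, and `N_s - d P_s = λ (r - d) e^{rs} ≤ λ (r - d) < -d`;
together these give `0 < x_s < y_s < 1`. The case `x₀ < y₀` follows from the symmetry
`(λ, μ) ↦ (-λ, -μ)`, which exchanges `x_s` and `y_s`.
-/

open Real Set

noncomputable def charNum (r d l m s : ℝ) : ℝ :=
  l * r * exp (r * s) + m * d * exp (d * s)

noncomputable def charDen (r d l m s : ℝ) : ℝ :=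
  l * exp (r * s) + m * exp (d * s)

noncomputable def charZeroTime (r d l m : ℝ) : ℝ :=
  log (-(m * d) / (l * r)) / (r - d)

lemma xChar_eq (r d l m s : ℝ) :
    xChar r d l m s = charNum r d l m s / (d * (charDen r d l m s + 1)) := rfl

lemma yChar_eq (r d l m s : ℝ) :
    yChar r d l m s = charNum r d l m s / (d * (charDen r d l m s - 1)) := rfl

lemma xChar_neg_neg (r d l m s : ℝ) : xChar r d (-l) (-m) s = yChar r d l m s := by
  rw [xChar_eq, yChar_eq, ← neg_div_neg_eq]
  unfold charNum charDen
  congr 1 <;> ring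

lemma yChar_neg_neg (r d l m s : ℝ) : yChar r d (-l) (-m) s = xChar r d l m s := by
  rw [← xChar_neg_neg, neg_neg, neg_neg]

section CharCurve

variable {r d l m : ℝ}

lemma charNum_eq_mul_sub (hrd : d ≠ r) (hT : 0 < -(m * d) / (l * r)) (s : ℝ) :
    charNum r d l m s = l * r * exp (d * s)
      * (exp ((r - d) * s) - exp ((r - d) * charZeroTime r d l m)) := by
  have hlr : l * r ≠ 0 := by
    rintro h
    simp [h] at hT
  obtain ⟨hl, hr⟩ := mul_ne_zero_iff.1 hlr
  have hexpT : exp ((r - d) * charZeroTime r d l m) = -(m * d) / (l * r) := by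
    rw [charZeroTime, mul_div_cancel₀ _ (sub_ne_zero.2 hrd.symm), exp_log hT]
  rw [hexpT, charNum, show r * s = d * s + (r - d) * s by ring, exp_add]
  field_simp
  ring

lemma charNum_charZeroTime (hrd : d ≠ r) (hT : 0 < -(m * d) / (l * r)) :
    charNum r d l m (charZeroTime r d l m) = 0 := by
  rw [charNum_eq_mul_sub hrd hT, sub_self, mul_zero]

lemma charNum_pos (hrd : d < r) (hlr : l * r < 0) (hT : 0 < -(m * d) / (l * r)) {s : ℝ}
    (hs : s < charZeroTime r d l m) : 0 < charNum r d l m s := by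
  rw [charNum_eq_mul_sub hrd.ne hT]
  refine mul_pos_of_neg_of_neg (mul_neg_of_neg_of_pos hlr (exp_pos _)) (sub_neg.2 ?_)
  exact exp_lt_exp.2 (mul_lt_mul_of_pos_left hs (sub_pos.2 hrd))

lemma one_lt_charDen (hr : 0 < r) (hd : 0 ≤ d) (hm : r < m * (r - d)) {s : ℝ} (hs : 0 ≤ s)
    (hN : 0 ≤ charNum r d l m s) : 1 < charDen r d l m s := by
  refine lt_of_mul_lt_mul_left ?_ hr.le
  calc r * 1 < m * (r - d) := by rwa [mul_one]
    _ ≤ m * (r - d) * exp (d * s) :=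
        le_mul_of_one_le_right (hr.trans hm).le (one_le_exp (mul_nonneg hd hs))
    _ ≤ charNum r d l m s + m * (r - d) * exp (d * s) := le_add_of_nonneg_left hN
    _ = r * charDen r d l m s := by unfold charNum charDen; ring

lemma charNum_lt (hr : 0 ≤ r) (hd : 0 ≤ d) (hl : l * (r - d) < -d) {s : ℝ} (hs : 0 ≤ s) :
    charNum r d l m s < d * (charDen r d l m s - 1) := by
  have hexp : l * (r - d) * exp (r * s) ≤ l * (r - d) := by
    simpa using mul_le_mul_of_nonpos_left (one_le_exp (mul_nonneg hr hs)) (by linarith)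
  calc charNum r d l m s = d * charDen r d l m s + l * (r - d) * exp (r * s) := by
        unfold charNum charDen; ring
    _ < d * (charDen r d l m s - 1) := by linarith

lemma charCoeffs_sign (hd : 0 < d) (hrd : d < r) (hl : l * (r - d) < -d)
    (hm : r < m * (r - d)) : l * r < 0 ∧ 0 < -(m * d) / (l * r) := by
  have hr : 0 < r := hd.trans hrd
  have hrd' : 0 ≤ r - d := (sub_pos.2 hrd).le
  have hl₀ : l < 0 := neg_of_mul_neg_left (hl.trans (neg_neg_of_pos hd)) hrd'
  have hm₀ : 0 < m := pos_of_mul_pos_left (hr.trans hm) hrd'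
  have hlr : l * r < 0 := mul_neg_of_neg_of_pos hl₀ hr
  exact ⟨hlr, div_pos_of_neg_of_neg (neg_neg_of_pos (mul_pos hm₀ hd)) hlr⟩

lemma xChar_yChar_mem_Ioo (hd : 0 < d) (hrd : d < r) (hl : l * (r - d) < -d)
    (hm : r < m * (r - d)) {s : ℝ} (hs : s ∈ Ico 0 (charZeroTime r d l m)) :
    xChar r d l m s ∈ Ioo 0 1 ∧ yChar r d l m s ∈ Ioo 0 1 := by
  obtain ⟨hlr, hT⟩ := charCoeffs_sign hd hrd hl hm
  obtain ⟨hs₀, hsT⟩ := hs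
  have hr : 0 < r := hd.trans hrd
  have hN := charNum_pos hrd hlr hT hsT
  have hP := one_lt_charDen hr hd.le hm hs₀ hN.le
  have hNP : charNum r d l m s < d * (charDen r d l m s - 1) := charNum_lt hr.le hd.le hl hs₀
  have hdP : 0 < d * (charDen r d l m s - 1) := mul_pos hd (sub_pos.2 hP)
  have hy : yChar r d l m s ∈ Ioo 0 1 := by
    rw [yChar_eq]
    exact ⟨div_pos hN hdP, (div_lt_one hdP).2 hNP⟩
  have hxy : xChar r d l m s < yChar r d l m s := by
    rw [xChar_eq, yChar_eq]
    exact div_lt_div_of_pos_left hN hdP (mul_lt_mul_of_pos_left (by linarith) hd)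
  refine ⟨⟨?_, hxy.trans hy.2⟩, hy⟩
  rw [xChar_eq]
  exact div_pos hN (mul_pos hd (by linarith))

lemma xChar_yChar_charZeroTime (hd : 0 < d) (hrd : d < r) (hl : l * (r - d) < -d)
    (hm : r < m * (r - d)) :
    xChar r d l m (charZeroTime r d l m) = 0 ∧ yChar r d l m (charZeroTime r d l m) = 0 := by
  have hN := charNum_charZeroTime hrd.ne (charCoeffs_sign hd hrd hl hm).2
  rw [xChar_eq, yChar_eq, hN, zero_div, zero_div]
  exact ⟨rfl, rfl⟩

end CharCurve

lemma lamOf_swap (r d x₀ y₀ : ℝ) : lamOf r d y₀ x₀ = -lamOf r d x₀ y₀ := by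
  unfold lamOf
  rw [show (y₀ - x₀) * (r - d) = -((x₀ - y₀) * (r - d)) by ring, div_neg]
  ring_nf

lemma muOf_swap (r d x₀ y₀ : ℝ) : muOf r d y₀ x₀ = -muOf r d x₀ y₀ := by
  unfold muOf
  rw [show (y₀ - x₀) * (r - d) = -((x₀ - y₀) * (r - d)) by ring, div_neg]
  ring_nf

lemma s0Of_swap (r d x₀ y₀ : ℝ) : s0Of r d y₀ x₀ = s0Of r d x₀ y₀ := by
  unfold s0Of
  ring_nf

section InitialData

variable {r d x₀ y₀ : ℝ}

lemma lamOf_mul_sub_lt (hd : 0 < d) (hrd : d < r) (hx₀ : x₀ < 1) (hy₀ : 0 < y₀)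
    (hlt : y₀ < x₀) : lamOf r d x₀ y₀ * (r - d) < -d := by
  have hδ : 0 < x₀ - y₀ := sub_pos.2 hlt
  have : lamOf r d x₀ y₀ * (r - d) = (2 * d * x₀ * y₀ - d * (x₀ + y₀)) / (x₀ - y₀) := by
    unfold lamOf
    field_simp [(sub_pos.2 hrd).ne']
  rw [this, div_lt_iff₀ hδ]
  nlinarith [mul_pos (mul_pos hd hy₀) (sub_pos.2 hx₀)]

lemma lt_muOf_mul_sub (hd : 0 < d) (hrd : d < r) (hx₀ : x₀ < 1) (hy₀ : 0 < y₀)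
    (hlt : y₀ < x₀) : r < muOf r d x₀ y₀ * (r - d) := by
  have hδ : 0 < x₀ - y₀ := sub_pos.2 hlt
  have : muOf r d x₀ y₀ * (r - d) = (-(2 * d * x₀ * y₀) + r * (x₀ + y₀)) / (x₀ - y₀) := by
    unfold muOf
    field_simp [(sub_pos.2 hrd).ne']
  rw [this, lt_div_iff₀ hδ]
  nlinarith [mul_pos hy₀ (show 0 < r - d * x₀ by nlinarith)]

lemma s0Of_eq_charZeroTime (hd : 0 < d) (hrd : d < r) (hne : x₀ ≠ y₀) :
    s0Of r d x₀ y₀ = charZeroTime r d (lamOf r d x₀ y₀) (muOf r d x₀ y₀) := by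
  have hr : r ≠ 0 := (hd.trans hrd).ne'
  have hD : (x₀ - y₀) * (r - d) ≠ 0 := mul_ne_zero (sub_ne_zero.2 hne) (sub_pos.2 hrd).ne'
  have hlam : lamOf r d x₀ y₀ * r = -(d * r * (x₀ + y₀ - 2 * x₀ * y₀) / ((x₀ - y₀) * (r - d))) := by
    unfold lamOf
    ring
  have hmu : muOf r d x₀ y₀ * d
      = d * r * (x₀ + y₀ - 2 * (d / r) * x₀ * y₀) / ((x₀ - y₀) * (r - d)) := by
    unfold muOf
    field_simp
    ring
  have hratio : -(muOf r d x₀ y₀ * d) / (lamOf r d x₀ y₀ * r)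
      = ((x₀ + y₀ - 2 * x₀ * y₀) / (x₀ + y₀ - 2 * (d / r) * x₀ * y₀))⁻¹ := by
    rw [hlam, hmu, neg_div_neg_eq, div_div_div_cancel_right₀ hD,
      mul_div_mul_left _ _ (mul_ne_zero hd.ne' hr), inv_div]
  rw [s0Of, charZeroTime, hratio, log_inv, neg_div, ← div_neg, neg_sub]

end InitialData

/-- for `s ∈ [0, s₀)` the characteristic curve `(x_s, y_s)` stays in
`(0,1)²`, and at `s = s₀` one has `x_{s₀} = y_{s₀} = 0`. -/
theorem char_curve_in_unit_square (r d x₀ y₀ : ℝ) (hd : 0 < d) (hrd : d < r)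
    (hx₀ : x₀ ∈ Set.Ioo (0 : ℝ) 1) (hy₀ : y₀ ∈ Set.Ioo (0 : ℝ) 1) (hne : x₀ ≠ y₀) :
    (∀ s ∈ Set.Ico (0 : ℝ) (s0Of r d x₀ y₀),
      xChar r d (lamOf r d x₀ y₀) (muOf r d x₀ y₀) s ∈ Set.Ioo (0 : ℝ) 1 ∧
      yChar r d (lamOf r d x₀ y₀) (muOf r d x₀ y₀) s ∈ Set.Ioo (0 : ℝ) 1) ∧
    xChar r d (lamOf r d x₀ y₀) (muOf r d x₀ y₀) (s0Of r d x₀ y₀) = 0 ∧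
    yChar r d (lamOf r d x₀ y₀) (muOf r d x₀ y₀) (s0Of r d x₀ y₀) = 0 := by
  wlog hlt : y₀ < x₀ generalizing x₀ y₀
  · have H := this y₀ x₀ hy₀ hx₀ hne.symm (lt_of_le_of_ne (not_lt.1 hlt) hne)
    rw [lamOf_swap, muOf_swap, s0Of_swap] at H
    simp only [xChar_neg_neg, yChar_neg_neg] at H
    exact ⟨fun s hs => (H.1 s hs).symm, H.2.2, H.2.1⟩
  have hl := lamOf_mul_sub_lt hd hrd hx₀.2 hy₀.1 hlt
  have hm := lt_muOf_mul_sub hd hrd hx₀.2 hy₀.1 hlt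
  rw [s0Of_eq_charZeroTime hd hrd hne]
  exact ⟨fun s hs => xChar_yChar_mem_Ioo hd hrd hl hm hs, xChar_yChar_charZeroTime hd hrd hl hm⟩
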